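/- Let n be a positive odd integer and ζ a primitive n-th root of unity. Then sum_{k=0}^{n-1} ((ζ; ζ^2)_k (-1; ζ^2)_k / (ζ^2; ζ^2)_k) ζ^(2k) = (-1)^((n-1)/2). -/

import Mathlib

/-!
Put `q = ζ²` and `n = 2M + 1`. Then `ζ q^M = 1`, i.e. `ζ = q^{-M}`, so every term with `k > M`
contains the factor `1 - ζ q^M = 0`, and the sum is the terminating `q`-Chu–Vandermonde sum
`∑_{k ≤ M} (q^{-M};q)_k (b;q)_k / (q;q)_k · q^k = b^M` at `b = -1`. Since
`(q^{-M};q)_k / (q;q)_k = (-1)^k q^{C(M-k,2) - C(M,2) - k} [M choose k]_q`, that identity becomes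
`∑_k [M choose k]_q (-1)^k q^{C(M-k,2)} (b;q)_k = b^M q^{C(M,2)}`, which follows by induction
on `M` from the `q`-Pascal rule, applied with `b` and `bq`.
-/

open Finset

theorem succ_choose_two (d : ℕ) : (d + 1).choose 2 = d.choose 2 + d := by
  rw [Nat.choose_succ_succ', Nat.choose_one_right, add_comm]

def qPochhammer {R : Type*} [CommRing R] (a q : R) (k : ℕ) : R :=
  ∏ i ∈ range k, (1 - a * q ^ i)

def qBinomial {R : Type*} [Semiring R] (q : R) : ℕ → ℕ → R
  | _, 0 => 1
  | 0, _ + 1 => 0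
  | N + 1, k + 1 => qBinomial q N k + q ^ (k + 1) * qBinomial q N (k + 1)

section CommRing

variable {R : Type*} [CommRing R]

theorem qPochhammer_zero (a q : R) : qPochhammer a q 0 = 1 := prod_range_zero _

theorem qPochhammer_succ (a q : R) (k : ℕ) :
    qPochhammer a q (k + 1) = qPochhammer a q k * (1 - a * q ^ k) :=
  prod_range_succ _ _

theorem qPochhammer_succ' (a q : R) (k : ℕ) :
    qPochhammer a q (k + 1) = (1 - a) * qPochhammer (a * q) q k := by
  simp only [qPochhammer, prod_range_succ', pow_zero, mul_one, pow_succ', mul_assoc, mul_comm]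

theorem qPochhammer_ne_zero_of_le {a q : R} {k N : ℕ} (h : qPochhammer a q N ≠ 0) (hk : k ≤ N) :
    qPochhammer a q k ≠ 0 := by
  unfold qPochhammer at h
  rw [← prod_range_mul_prod_Ico _ hk] at h
  exact left_ne_zero_of_mul h

theorem qPochhammer_eq_zero_of_mul_pow_eq_one {a q : R} {N k : ℕ} (ha : a * q ^ N = 1)
    (hk : N < k) : qPochhammer a q k = 0 :=
  prod_eq_zero (mem_range.2 hk) (by rw [ha, sub_self])

@[simp]
theorem qBinomial_zero_right (q : R) (N : ℕ) : qBinomial q N 0 = 1 := by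
  cases N <;> rfl

theorem qBinomial_succ_succ (q : R) (N k : ℕ) :
    qBinomial q (N + 1) (k + 1) = qBinomial q N k + q ^ (k + 1) * qBinomial q N (k + 1) := rfl

theorem qBinomial_eq_zero_of_lt (q : R) {N k : ℕ} (h : N < k) : qBinomial q N k = 0 := by
  induction N generalizing k with
  | zero => obtain ⟨k, rfl⟩ := Nat.exists_eq_add_of_lt h; rfl
  | succ N ih =>
    obtain ⟨k, rfl⟩ := Nat.exists_eq_add_of_lt h
    rw [qBinomial_succ_succ, ih (by omega), ih (by omega), mul_zero, add_zero]

theorem qBinomial_mul_qPochhammer (q : R) (N k : ℕ) :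
    qBinomial q N k * qPochhammer q q k = ∏ i ∈ range k, (1 - q ^ (N - i)) := by
  induction N generalizing k with
  | zero => cases k <;> simp [qBinomial, qPochhammer, prod_range_succ']
  | succ N ih =>
    cases k with
    | zero => simp [qPochhammer_zero]
    | succ k =>
      set P := ∏ i ∈ range k, (1 - q ^ (N - i))
      have hfirst : ∏ i ∈ range (k + 1), (1 - q ^ (N + 1 - i)) = P * (1 - q ^ (N + 1)) := by
        simp [P, prod_range_succ', mul_comm]
      have hlast : qBinomial q N (k + 1) * qPochhammer q q (k + 1) = P * (1 - q ^ (N - k)) := by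
        rw [ih, prod_range_succ]
      have hstep : qPochhammer q q (k + 1) = qPochhammer q q k * (1 - q ^ (k + 1)) := by
        rw [qPochhammer_succ, pow_succ']
      -- stated with the factor `P`: for `k > N` the subtraction `N - k` truncates, but then `P = 0`
      have hpow : P * (q ^ (k + 1) * q ^ (N - k)) = P * q ^ (N + 1) := by
        rcases le_or_gt k N with hkN | hNk
        · rw [← pow_add, show k + 1 + (N - k) = N + 1 by omega]
        · have hP : P = 0 := prod_eq_zero (mem_range.2 hNk) (by simp)
          rw [hP, zero_mul, zero_mul]
      rw [qBinomial_succ_succ, hfirst]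
      linear_combination qBinomial q N k * hstep + (1 - q ^ (k + 1)) * ih k
        + q ^ (k + 1) * hlast - hpow

theorem qBinomial_pascal_term (q b : R) {N j : ℕ} (hj : j ≤ N) :
    qBinomial q (N + 1) (j + 1) * (-1) ^ (j + 1) * q ^ (N - j).choose 2 * qPochhammer b q (j + 1)
      = -(1 - b) * (qBinomial q N j * (-1) ^ j * q ^ (N - j).choose 2 * qPochhammer (b * q) q j)
        + q ^ N * (qBinomial q N (j + 1) * (-1) ^ (j + 1) * q ^ (N - (j + 1)).choose 2
          * qPochhammer b q (j + 1)) := by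
  have hexp : qBinomial q N (j + 1) * (q ^ (j + 1) * q ^ (N - j).choose 2)
      = qBinomial q N (j + 1) * (q ^ N * q ^ (N - (j + 1)).choose 2) := by
    rcases hj.lt_or_eq with hjN | rfl
    · obtain ⟨d, hd⟩ : ∃ d, N - j = d + 1 := ⟨N - (j + 1), by omega⟩
      rw [← pow_add, ← pow_add, hd, succ_choose_two, show N - (j + 1) = d by omega]
      congr 2
      omega
    · rw [qBinomial_eq_zero_of_lt q (Nat.lt_succ_self j), zero_mul, zero_mul]
  rw [qBinomial_succ_succ]
  linear_combination (-1) ^ (j + 1) * qBinomial q N j * q ^ (N - j).choose 2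
      * qPochhammer_succ' b q j + (-1) ^ (j + 1) * qPochhammer b q (j + 1) * hexp

theorem sum_qBinomial_mul_qPochhammer (q b : R) (N : ℕ) :
    ∑ k ∈ range (N + 1), qBinomial q N k * (-1) ^ k * q ^ (N - k).choose 2 * qPochhammer b q k
      = b ^ N * q ^ N.choose 2 := by
  induction N generalizing b with
  | zero => simp [qPochhammer_zero]
  | succ N ih =>
    have htail : ∑ j ∈ range (N + 1), qBinomial q N (j + 1) * (-1) ^ (j + 1)
        * q ^ (N - (j + 1)).choose 2 * qPochhammer b q (j + 1)
          = b ^ N * q ^ N.choose 2 - q ^ N.choose 2 := by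
      rw [sum_range_succ, qBinomial_eq_zero_of_lt q (Nat.lt_succ_self N), ← ih b,
        sum_range_succ' _ N]
      simp [qPochhammer_zero]
    rw [sum_range_succ']
    simp only [Nat.add_sub_add_right]
    rw [sum_congr rfl fun j hj => qBinomial_pascal_term q b
        (Nat.lt_succ_iff.1 (mem_range.1 hj)), sum_add_distrib, ← mul_sum, ← mul_sum, ih, htail]
    simp only [qBinomial_zero_right, Nat.sub_zero, succ_choose_two, qPochhammer_zero, pow_zero]
    ring

theorem pow_choose_two_mul_qPochhammer_of_mul_pow_eq_one {a q : R} {N k : ℕ}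
    (ha : a * q ^ N = 1) (hk : k ≤ N) :
    q ^ N.choose 2 * qPochhammer a q k * q ^ k
      = (-1) ^ k * q ^ (N - k).choose 2 * ∏ i ∈ range k, (1 - q ^ (N - i)) := by
  induction k with
  | zero => simp [qPochhammer_zero]
  | succ k ih =>
    obtain ⟨d, hd⟩ : ∃ d, N - k = d + 1 := ⟨N - (k + 1), by omega⟩
    have hfactor : a * q ^ k * q ^ (d + 1) = 1 := by
      rw [mul_assoc, ← pow_add, show k + (d + 1) = N by omega, ha]
    rw [qPochhammer_succ, prod_range_succ, show N - (k + 1) = d by omega, hd]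
    rw [hd, succ_choose_two, pow_add] at ih
    linear_combination (1 - a * q ^ k) * q * ih (by omega)
      - (-1) ^ k * q ^ d.choose 2 * (∏ i ∈ range k, (1 - q ^ (N - i))) * hfactor

end CommRing

theorem sum_qPochhammer_mul_qPochhammer_div_of_mul_pow_eq_one {K : Type*} [Field K]
    {a q : K} {N : ℕ} (ha : a * q ^ N = 1) (hq : qPochhammer q q N ≠ 0) (b : K) :
    ∑ k ∈ range (N + 1), qPochhammer a q k * qPochhammer b q k / qPochhammer q q k * q ^ k
      = b ^ N := by
  have hqC : q ^ N.choose 2 ≠ 0 := by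
    rcases N with _ | N
    · simp
    · exact pow_ne_zero _ fun h => by simp [h] at ha
  apply mul_left_cancel₀ hqC
  rw [mul_sum, mul_comm, ← sum_qBinomial_mul_qPochhammer q b N]
  refine sum_congr rfl fun k hk => ?_
  have hkN : k ≤ N := Nat.lt_succ_iff.1 (mem_range.1 hk)
  have hterm := pow_choose_two_mul_qPochhammer_of_mul_pow_eq_one ha hkN
  rw [← qBinomial_mul_qPochhammer] at hterm
  field_simp [qPochhammer_ne_zero_of_le hq hkN]
  linear_combination qPochhammer b q k * hterm

theorem guo_congruence_at_root_of_unity_general (n : ℕ) (ho : Odd n) (ζ : ℂ)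
    (hζ : IsPrimitiveRoot ζ n) :
    ∑ k ∈ Finset.range n,
        (∏ i ∈ Finset.range k, (1 - ζ * (ζ ^ 2) ^ i)) *
            (∏ i ∈ Finset.range k, (1 - (-1) * (ζ ^ 2) ^ i)) /
          (∏ i ∈ Finset.range k, (1 - ζ ^ 2 * (ζ ^ 2) ^ i)) * ζ ^ (2 * k) =
      (-1) ^ ((n - 1) / 2) := by
  obtain ⟨M, rfl⟩ := ho
  have hζM : ζ * (ζ ^ 2) ^ M = 1 := by
    rw [← pow_mul, ← pow_succ', ← hζ.pow_eq_one]
  have hq : qPochhammer (ζ ^ 2) (ζ ^ 2) M ≠ 0 :=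
    prod_ne_zero_iff.2 fun i hi => sub_ne_zero.2 <| Ne.symm <| by
      rw [← pow_succ', ← pow_mul]
      exact hζ.pow_ne_one_of_pos_of_lt (by omega) (by simp at hi; omega)
  have hvanish : ∀ k ∈ range (2 * M + 1), k ∉ range (M + 1) →
      qPochhammer ζ (ζ ^ 2) k * qPochhammer (-1) (ζ ^ 2) k / qPochhammer (ζ ^ 2) (ζ ^ 2) k
        * (ζ ^ 2) ^ k = 0 := fun k _ hk => by
    rw [qPochhammer_eq_zero_of_mul_pow_eq_one hζM (by simpa using hk), zero_mul, zero_div,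
      zero_mul]
  rw [show (2 * M + 1 - 1) / 2 = M by omega]
  simp_rw [pow_mul ζ 2]
  exact (sum_subset (range_subset_range.2 (by omega)) hvanish).symm.trans
    (sum_qPochhammer_mul_qPochhammer_div_of_mul_pow_eq_one hζM hq (-1))

/-- For odd `n` and a primitive `n`-th root of unity `ζ`,
`∑_{k=0}^{n-1} (ζ;ζ²)_k (-1;ζ²)_k / (ζ²;ζ²)_k · ζ^(2k) = (-1)^((n-1)/2)`. -/
theorem guo_congruence_at_root_of_unity (n : ℕ) (hn : 0 < n) (ho : Odd n) (ζ : ℂ)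
    (hζ : IsPrimitiveRoot ζ n) :
    ∑ k ∈ Finset.range n,
        (∏ i ∈ Finset.range k, (1 - ζ * (ζ ^ 2) ^ i)) *
            (∏ i ∈ Finset.range k, (1 - (-1) * (ζ ^ 2) ^ i)) /
          (∏ i ∈ Finset.range k, (1 - ζ ^ 2 * (ζ ^ 2) ^ i)) * ζ ^ (2 * k) =
      (-1) ^ ((n - 1) / 2) :=
  guo_congruence_at_root_of_unity_general n ho ζ hζ
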